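/- Comparison for the approximate problem: Assume (M) and (J1') hold, let f, g be continuous on the closure of B_R, and let ε, R, M > 0 and k ∈ ℕ. Let u, v ∈ C²(closure of B_R) satisfy, in the classical pointwise sense, u − T_M[L^R_k[u,Du]] − εΔu ≤ f and v − T_M[L^R_k[v,Dv]] − εΔv ≥ g in B_R. If u ≤ v on ∂B_R and f ≤ g in B_R, then u ≤ v on the closure of B_R. -/

import Mathlib

set_option autoImplicit false

open MeasureTheory Filter Topology Metric
open scoped InnerProductSpace ENNReal NNReal

noncomputable section



/-- `ℝ^n` as a Euclidean space. -/
abbrev RE (n : ℕ) : Type := EuclideanSpace ℝ (Fin n)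

/-- The truncation `T_M(s) = min(max(s,-M),M)`. -/
def TM (M s : ℝ) : ℝ := min (max s (-M)) M

/-- The orthogonal projection onto the closed ball of radius `R` centered at the origin. -/
def projR {N : ℕ} (R : ℝ) (x : RE N) : RE N := if ‖x‖ ≤ R then x else (R / ‖x‖) • x

/-- The rescaled mollifier `ρ_k(z) = k^P ρ(kz)`. -/
def rhok {P : ℕ} (ρ : RE P → ℝ) (k : ℕ) (z : RE P) : ℝ := (k : ℝ) ^ P * ρ ((k : ℝ) • z)

/-- The annulus `{ 1/k < |z| < k }`. -/
def annulus (P : ℕ) (k : ℕ) : Set (RE P) := {z : RE P | 1 / (k : ℝ) < ‖z‖ ∧ ‖z‖ < (k : ℝ)}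

/-- The mollified truncated measure `μ_{1,k} = ρ_k ∗ (μ₁ · 1_{1/k<|z|<k})`. -/
def mollify1 {P : ℕ} (ρ : RE P → ℝ) (k : ℕ) (μ₁ : Measure (RE P)) : Measure (RE P) :=
  Measure.map (fun q : RE P × RE P => q.1 + q.2)
    ((volume.withDensity (fun x => ENNReal.ofReal (rhok ρ k x))).prod
      (μ₁.restrict (annulus P k)))

/-- The mollified measure `μ_{2,k} = ρ_k ∗ μ₂`. -/
def mollify2 {P : ℕ} (ρ : RE P → ℝ) (k : ℕ) (μ₂ : Measure (RE P)) : Measure (RE P) :=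
  Measure.map (fun q : RE P × RE P => q.1 + q.2)
    ((volume.withDensity (fun x => ENNReal.ofReal (rhok ρ k x))).prod μ₂)

/-- The gradient of `v` on the closed ball `B̄_R` (computed with derivatives within). -/
def gradW {N : ℕ} (R : ℝ) (v : RE N → ℝ) (x : RE N) : RE N :=
  ∑ i : Fin N, (fderivWithin ℝ v (closedBall (0 : RE N) R) x (EuclideanSpace.single i (1:ℝ))) •
    EuclideanSpace.single i (1 : ℝ)

/-- The Laplacian of `v` on the closed ball `B̄_R` (computed with derivatives within). -/
def lapW {N : ℕ} (R : ℝ) (v : RE N → ℝ) (x : RE N) : ℝ :=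
  ∑ i : Fin N, fderivWithin ℝ
    (fun y => fderivWithin ℝ v (closedBall (0 : RE N) R) y (EuclideanSpace.single i (1:ℝ)))
    (closedBall (0 : RE N) R) x (EuclideanSpace.single i (1:ℝ))

/-- The nonlocal operator `L^R_k` of the approximate problem, with jumps projected back
onto the closed ball `B̄_R`; to be used with the mollified measures `μ_{1,k}, μ_{2,k}`. -/
def LRk {N P : ℕ} (ν₁ ν₂ : Measure (RE P)) (j₁ j₂ : RE N → RE P → RE N)
    (R : ℝ) (v : RE N → ℝ) (x : RE N) : ℝ :=
  (∫ z, (v (projR R (x + j₁ (gradW R v x) z)) - v x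
      - (if ‖z‖ < 1 then ⟪gradW R v x, j₁ (gradW R v x) z⟫_ℝ else 0)) ∂ν₁)
  + ∫ z, (v (projR R (x + j₂ (gradW R v x) z)) - v x) ∂ν₂



section Helpers
open Filter Topology Metric MeasureTheory
open scoped InnerProductSpace ENNReal NNReal

lemma second_deriv_test {φ φ' : ℝ → ℝ} {a : ℝ}
    (hφ : ∀ᶠ t in 𝓝 (0:ℝ), HasDerivAt φ (φ' t) t)
    (ha : HasDerivAt φ' a 0) (hmax : IsLocalMax φ 0) : a ≤ 0 := by
  by_contra hc
  push_neg at hc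
  have h0 : φ' 0 = 0 := by
    have hd : deriv φ 0 = φ' 0 := (hφ.self_of_nhds).deriv
    rw [← hd]; exact hmax.deriv_eq_zero
  have hslope := hasDerivAt_iff_tendsto_slope.1 ha
  have hpos : ∀ᶠ t in 𝓝[≠] (0:ℝ), 0 < slope φ' 0 t :=
    hslope.eventually (eventually_gt_nhds hc)
  have H : ∀ᶠ t in 𝓝 (0:ℝ), HasDerivAt φ (φ' t) t ∧ φ t ≤ φ 0 := hφ.and hmax
  obtain ⟨δ, hδ, hball⟩ := Metric.eventually_nhds_iff.1 H
  obtain ⟨δ', hδ', hball'⟩ := Metric.mem_nhdsWithin_iff.1 hpos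
  set c : ℝ := min δ δ' / 2 with hc_def
  have hc0 : 0 < c := by positivity
  have hcδ : c < δ := by
    have : c ≤ δ / 2 := by
      have := min_le_left δ δ'
      simp only [hc_def]; linarith
    linarith
  have hcδ' : c < δ' := by
    have : c ≤ δ' / 2 := by
      have := min_le_right δ δ'
      simp only [hc_def]; linarith
    linarith
  have hmono : StrictMonoOn φ (Set.Icc 0 c) := by
    apply strictMonoOn_of_deriv_pos (convex_Icc 0 c)
    · intro t ht
      have hdist : dist t 0 < δ := by
        rw [Real.dist_eq, sub_zero]
        rw [abs_of_nonneg ht.1]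
        exact lt_of_le_of_lt ht.2 hcδ
      exact ((hball hdist).1.continuousAt).continuousWithinAt
    · intro t ht
      rw [interior_Icc] at ht
      have ht0 : 0 < t := ht.1
      have hdist : dist t 0 < δ := by
        rw [Real.dist_eq, sub_zero, abs_of_pos ht0]; exact lt_trans ht.2 hcδ
      have hsp : 0 < slope φ' 0 t := hball'
        ⟨by simpa [Real.dist_eq, abs_of_pos ht0] using lt_trans ht.2 hcδ', by simpa using ht0.ne'⟩
      rw [(hball hdist).1.deriv]
      have : slope φ' 0 t = φ' t / t := by
        rw [slope_def_field, h0, sub_zero, sub_zero]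
      rw [this] at hsp
      have := mul_pos hsp ht0
      rwa [div_mul_cancel₀ _ ht0.ne'] at this
  have h1 : φ 0 < φ c := hmono (Set.left_mem_Icc.2 hc0.le) (Set.right_mem_Icc.2 hc0.le) hc0
  have h2 : φ c ≤ φ 0 := (hball (by rw [Real.dist_eq, sub_zero, abs_of_pos hc0]; exact hcδ)).2
  linarith

lemma projR_mem {N : ℕ} {R : ℝ} (hR : 0 ≤ R) (x : RE N) :
    projR R x ∈ closedBall (0 : RE N) R := by
  rw [mem_closedBall_zero_iff, projR]
  split_ifs with h
  · exact h
  · push_neg at h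
    have hx : ‖x‖ ≠ 0 := (lt_of_le_of_lt hR h).ne'
    rw [norm_smul, Real.norm_eq_abs, abs_of_nonneg (by positivity), div_mul_cancel₀ _ hx]

lemma measurable_projR {N : ℕ} (R : ℝ) : Measurable (projR (N := N) R) := by
  unfold projR
  exact Measurable.ite (measurableSet_le measurable_norm measurable_const) measurable_id
    ((measurable_const.div measurable_norm).smul measurable_id)

lemma rhok_lintegral_lt_top {P : ℕ} {ρ : RE P → ℝ} {k : ℕ} (hk : 1 ≤ k)
    (hρsmooth : ContDiff ℝ (⊤ : ℕ∞) ρ) (hρsupp : Function.support ρ ⊆ ball (0 : RE P) 1) :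
    (∫⁻ z, ENNReal.ofReal (rhok ρ k z)) < ⊤ := by
  have hc : Continuous (rhok ρ k) :=
    continuous_const.mul (hρsmooth.continuous.comp (continuous_const_smul _))
  have hk0 : (0:ℝ) < (k:ℝ) := by exact_mod_cast hk
  have hsupp : Function.support (rhok ρ k) ⊆ ball (0 : RE P) 1 := by
    intro z hz
    have hz2 : ρ ((k:ℝ) • z) ≠ 0 := fun h => hz (by simp [rhok, h])
    have := hρsupp hz2
    rw [mem_ball_zero_iff] at this ⊢
    calc ‖z‖ ≤ (k:ℝ) * ‖z‖ := le_mul_of_one_le_left (norm_nonneg _) (by exact_mod_cast hk)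
    _ = ‖(k:ℝ) • z‖ := by rw [norm_smul, Real.norm_eq_abs, abs_of_pos hk0]
    _ < 1 := this
  have hcs : HasCompactSupport (rhok ρ k) := by
    apply IsCompact.of_isClosed_subset (isCompact_closedBall (0:RE P) 1) isClosed_closure
    exact closure_minimal (hsupp.trans ball_subset_closedBall) isClosed_closedBall
  have hint : Integrable (rhok ρ k) := hc.integrable_of_hasCompactSupport hcs
  calc (∫⁻ z, ENNReal.ofReal (rhok ρ k z)) ≤ ∫⁻ z, (‖rhok ρ k z‖₊ : ℝ≥0∞) := by
        apply lintegral_mono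
        intro z
        show ENNReal.ofReal (rhok ρ k z) ≤ (‖rhok ρ k z‖₊ : ℝ≥0∞)
        rw [← enorm_eq_nnnorm, ← ofReal_norm]
        exact ENNReal.ofReal_le_ofReal (le_abs_self _)
  _ < ⊤ := hint.hasFiniteIntegral

lemma mollify2_finite {P : ℕ} {ρ : RE P → ℝ} {k : ℕ} {μ₂ : Measure (RE P)} (hk : 1 ≤ k)
    (hρsmooth : ContDiff ℝ (⊤ : ℕ∞) ρ) (hρsupp : Function.support ρ ⊆ ball (0 : RE P) 1)
    (hM2 : μ₂ Set.univ < ⊤) : IsFiniteMeasure (mollify2 ρ k μ₂) := by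
  haveI : IsFiniteMeasure μ₂ := ⟨hM2⟩
  constructor
  rw [mollify2, Measure.map_apply (f := fun q : RE P × RE P => q.1 + q.2) (measurable_fst.add measurable_snd) MeasurableSet.univ,
    Set.preimage_univ, ← Set.univ_prod_univ, Measure.prod_prod,
    withDensity_apply _ MeasurableSet.univ, setLIntegral_univ]
  exact ENNReal.mul_lt_top (rhok_lintegral_lt_top hk hρsmooth hρsupp) hM2

lemma mollify1_finite {P : ℕ} {ρ : RE P → ℝ} {k : ℕ} {μ₁ : Measure (RE P)} (hk : 1 ≤ k)
    (hρsmooth : ContDiff ℝ (⊤ : ℕ∞) ρ) (hρsupp : Function.support ρ ⊆ ball (0 : RE P) 1)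
    (hM1 : (∫⁻ z, (‖z‖₊ : ℝ≥0∞) ^ 2 ∂μ₁) < ⊤) : IsFiniteMeasure (mollify1 ρ k μ₁) := by
  have hk0 : (0:ℝ) < (k:ℝ) := by exact_mod_cast hk
  have hann : μ₁ (annulus P k) < ⊤ := by
    set c : ℝ≥0∞ := ENNReal.ofReal ((1/(k:ℝ))^2) with hc_def
    have hc0 : c ≠ 0 := by
      rw [hc_def]
      simp only [ne_eq, ENNReal.ofReal_eq_zero, not_le]
      positivity
    have hle : c * μ₁ (annulus P k) ≤ ∫⁻ z, (‖z‖₊ : ℝ≥0∞) ^ 2 ∂μ₁ := by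
      rw [← setLIntegral_const (annulus P k) c]
      calc ∫⁻ z in annulus P k, c ∂μ₁ ≤ ∫⁻ z in annulus P k, (‖z‖₊ : ℝ≥0∞) ^ 2 ∂μ₁ := by
            have hms : MeasurableSet (annulus P k) :=
              (measurableSet_lt measurable_const measurable_norm).inter
                (measurableSet_lt measurable_norm measurable_const)
            apply setLIntegral_mono' hms
            intro z hz
            rw [hc_def, ← enorm_eq_nnnorm, ← ofReal_norm, ← ENNReal.ofReal_pow (norm_nonneg _)]
            exact ENNReal.ofReal_le_ofReal (pow_le_pow_left₀ (by positivity) hz.1.le 2)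
      _ ≤ ∫⁻ z, (‖z‖₊ : ℝ≥0∞) ^ 2 ∂μ₁ := setLIntegral_le_lintegral _ _
    by_contra h
    push_neg at h
    rw [top_le_iff] at h
    rw [h, ENNReal.mul_top hc0] at hle
    exact (lt_irrefl ⊤) (lt_of_le_of_lt hle hM1)
  haveI : IsFiniteMeasure (μ₁.restrict (annulus P k)) := by
    constructor
    rwa [Measure.restrict_apply_univ]
  constructor
  rw [mollify1, Measure.map_apply (f := fun q : RE P × RE P => q.1 + q.2) (measurable_fst.add measurable_snd) MeasurableSet.univ,
    Set.preimage_univ, ← Set.univ_prod_univ, Measure.prod_prod,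
    withDensity_apply _ MeasurableSet.univ, setLIntegral_univ, Measure.restrict_apply_univ]
  exact ENNReal.mul_lt_top (rhok_lintegral_lt_top hk hρsmooth hρsupp) hann

end Helpers

/-- Comparison for classical sub- and supersolutions of the approximate problem
`u - T_M[L^R_k[u,Du]] - εΔu = f` in `B_R`. -/
theorem comparison_approximate_problem
    (N P : ℕ) (hN : 1 ≤ N) (hP : 1 ≤ P)
    (μ₁ μ₂ : Measure (RE P)) (j₁ j₂ : RE N → RE P → RE N)
    (ρ : RE P → ℝ) (f g : RE N → ℝ)
    -- the mollifier
    (hρsmooth : ContDiff ℝ (⊤ : ℕ∞) ρ) (hρnonneg : ∀ z, 0 ≤ ρ z)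
    (hρsymm : ∀ z, ρ (-z) = ρ z)
    (hρsupp : Function.support ρ ⊆ ball (0 : RE P) 1)
    (hρint : ∫ z, ρ z = 1)
    -- (M)
    (hM0 : μ₁ {0} = 0) (hM0' : μ₂ {0} = 0)
    (hM1 : (∫⁻ z, (‖z‖₊ : ℝ≥0∞) ^ 2 ∂μ₁) < ⊤)
    (hM2 : μ₂ Set.univ < ⊤)
    -- (J1'): measurable, locally bounded, continuous in p for a.e. z, |j₁(p,z)| ≤ C_r|z|
    (hj₁m : Measurable (Function.uncurry j₁))
    (hj₂m : Measurable (Function.uncurry j₂))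
    (hloc : ∀ r > (0:ℝ), ∃ C : ℝ, ∀ p : RE N, ∀ z : RE P, ‖p‖ ≤ r → ‖z‖ ≤ r →
      ‖j₁ p z‖ ≤ C ∧ ‖j₂ p z‖ ≤ C)
    (hj₁c : ∀ᵐ z ∂μ₁, Continuous fun p => j₁ p z)
    (hj₂c : ∀ᵐ z ∂μ₂, Continuous fun p => j₂ p z)
    (hJ1' : ∀ r > (0:ℝ), ∃ C : ℝ, ∀ p : RE N, ∀ z : RE P, ‖p‖ ≤ r → ‖z‖ < 1 →
      ‖j₁ p z‖ ≤ C * ‖z‖)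
    -- the parameters
    (ε R M : ℝ) (hε : 0 < ε) (hR : 0 < R) (hM : 0 < M) (k : ℕ) (hk : 1 ≤ k)
    -- f, g continuous on the closed ball
    (hfc : ContinuousOn f (closedBall (0 : RE N) R))
    (hgc : ContinuousOn g (closedBall (0 : RE N) R))
    -- u, v : C² sub- and supersolutions
    (u v : RE N → ℝ)
    (hu : ContDiffOn ℝ 2 u (closedBall (0 : RE N) R))
    (hv : ContDiffOn ℝ 2 v (closedBall (0 : RE N) R))
    (husub : ∀ x ∈ ball (0 : RE N) R,
      u x - TM M (LRk (mollify1 ρ k μ₁) (mollify2 ρ k μ₂) j₁ j₂ R u x)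
        - ε * lapW R u x ≤ f x)
    (hvsuper : ∀ x ∈ ball (0 : RE N) R,
      g x ≤ v x - TM M (LRk (mollify1 ρ k μ₁) (mollify2 ρ k μ₂) j₁ j₂ R v x)
        - ε * lapW R v x)
    (hbc : ∀ x ∈ sphere (0 : RE N) R, u x ≤ v x)
    (hfg : ∀ x ∈ ball (0 : RE N) R, f x ≤ g x) :
    ∀ x ∈ closedBall (0 : RE N) R, u x ≤ v x := by
    classical
  have hRnn : (0:ℝ) ≤ R := hR.le
  set B : Set (RE N) := closedBall (0 : RE N) R with hBdef
  have hBne : B.Nonempty := ⟨0, by simp [hBdef, hRnn]⟩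
  have hwcont : ContinuousOn (fun x => u x - v x) B := hu.continuousOn.sub hv.continuousOn
  obtain ⟨x₀, hx₀B, hmax'⟩ := (isCompact_closedBall (0:RE N) R).exists_isMaxOn hBne hwcont
  rw [isMaxOn_iff] at hmax'
  have hmax : ∀ y ∈ B, u y - v y ≤ u x₀ - v x₀ := fun y hy => hmax' y hy
  suffices hkey : u x₀ - v x₀ ≤ 0 by
    intro x hx
    have := hmax x hx
    linarith
  by_cases hsph : ‖x₀‖ = R
  · have hx₀s : x₀ ∈ sphere (0 : RE N) R := by
      rwa [mem_sphere_zero_iff_norm]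
    linarith [hbc x₀ hx₀s]
  have hx₀ : x₀ ∈ ball (0 : RE N) R := by
    rw [mem_ball_zero_iff]
    exact lt_of_le_of_ne (mem_closedBall_zero_iff.1 hx₀B) hsph
  have hnhds : B ∈ 𝓝 x₀ := mem_of_superset (isOpen_ball.mem_nhds hx₀) ball_subset_closedBall
  have hud2 : ContDiffAt ℝ 2 u x₀ := hu.contDiffAt hnhds
  have hvd2 : ContDiffAt ℝ 2 v x₀ := hv.contDiffAt hnhds
  have hud : DifferentiableAt ℝ u x₀ := hud2.differentiableAt two_ne_zero
  have hvd : DifferentiableAt ℝ v x₀ := hvd2.differentiableAt two_ne_zero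
  have hlocmax : IsLocalMax (fun x => u x - v x) x₀ :=
    eventually_of_mem hnhds fun y hy => hmax y hy
  have hfw : fderiv ℝ (fun x => u x - v x) x₀ = 0 := hlocmax.fderiv_eq_zero
  have hder : fderiv ℝ u x₀ = fderiv ℝ v x₀ := by
    have h2 : fderiv ℝ u x₀ - fderiv ℝ v x₀ = 0 := by
      rw [← fderiv_sub hud hvd]; exact hfw
    exact sub_eq_zero.1 h2
  have hgrad : gradW R v x₀ = gradW R u x₀ := by
    unfold gradW
    simp only [fderivWithin_of_mem_nhds (show closedBall (0 : RE N) R ∈ 𝓝 x₀ from hnhds)]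
    rw [hder]
  -- Laplacian comparison
  have hlap : lapW R u x₀ - lapW R v x₀ ≤ 0 := by
    rw [lapW, lapW, ← Finset.sum_sub_distrib]
    apply Finset.sum_nonpos
    intro i _
    set e : RE N := EuclideanSpace.single i (1:ℝ) with he
    have hcongr : ∀ (φ : RE N → ℝ),
        (fun y => fderivWithin ℝ φ B y e) =ᶠ[𝓝 x₀] (fun y => fderiv ℝ φ y e) := by
      intro φ
      filter_upwards [isOpen_ball.eventually_mem hx₀] with y hy
      rw [fderivWithin_of_mem_nhds
        (mem_of_superset (isOpen_ball.mem_nhds hy) ball_subset_closedBall)]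
    have hdiffd : ∀ (φ : RE N → ℝ), ContDiffAt ℝ 2 φ x₀ →
        DifferentiableAt ℝ (fun y => fderiv ℝ φ y e) x₀ := by
      intro φ hφ
      have h1 : ContDiffAt ℝ 1 (fderiv ℝ φ) x₀ := hφ.fderiv_right (le_refl 2)
      exact (h1.differentiableAt one_ne_zero).clm_apply (differentiableAt_const e)
    have hu_term : fderivWithin ℝ (fun y => fderivWithin ℝ u B y e) B x₀ e
        = fderiv ℝ (fun y => fderiv ℝ u y e) x₀ e := by
      rw [fderivWithin_of_mem_nhds hnhds, (hcongr u).fderiv_eq]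
    have hv_term : fderivWithin ℝ (fun y => fderivWithin ℝ v B y e) B x₀ e
        = fderiv ℝ (fun y => fderiv ℝ v y e) x₀ e := by
      rw [fderivWithin_of_mem_nhds hnhds, (hcongr v).fderiv_eq]
    have hsub : fderiv ℝ (fun y => fderiv ℝ u y e) x₀ e - fderiv ℝ (fun y => fderiv ℝ v y e) x₀ e
        = fderiv ℝ (fun y => fderiv ℝ (fun x => u x - v x) y e) x₀ e := by
      have h12 : (fun y => fderiv ℝ (fun x => u x - v x) y e) =ᶠ[𝓝 x₀]
          (fun y => fderiv ℝ u y e - fderiv ℝ v y e) := by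
        filter_upwards [isOpen_ball.eventually_mem hx₀] with y hy
        have hyn : B ∈ 𝓝 y := mem_of_superset (isOpen_ball.mem_nhds hy) ball_subset_closedBall
        rw [fderiv_fun_sub ((hu.contDiffAt hyn).differentiableAt two_ne_zero)
          ((hv.contDiffAt hyn).differentiableAt two_ne_zero)]
        simp
      rw [h12.fderiv_eq, fderiv_fun_sub (hdiffd u hud2) (hdiffd v hvd2)]
      simp
    rw [hu_term, hv_term, hsub]
    -- second derivative test
    set w : RE N → ℝ := fun x => u x - v x with hw
    have hL : ∀ t : ℝ, HasDerivAt (fun s : ℝ => x₀ + s • e) e t := by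
      intro t
      have h1 : HasDerivAt (fun s : ℝ => s • e) ((1:ℝ) • e) t := (hasDerivAt_id t).smul_const e
      rw [one_smul] at h1
      exact h1.const_add x₀
    have hLt : Filter.Tendsto (fun t : ℝ => x₀ + t • e) (𝓝 0) (𝓝 x₀) := by
      have : Continuous (fun t : ℝ => x₀ + t • e) :=
        continuous_const.add (continuous_id.smul continuous_const)
      have h0 : x₀ + (0:ℝ) • e = x₀ := by simp
      exact this.tendsto' 0 x₀ h0
    have hev : ∀ᶠ t in 𝓝 (0:ℝ), x₀ + t • e ∈ ball (0 : RE N) R :=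
      hLt.eventually (isOpen_ball.eventually_mem hx₀)
    have hφ : ∀ᶠ t in 𝓝 (0:ℝ),
        HasDerivAt (fun s : ℝ => w (x₀ + s • e)) ((fun s : ℝ => fderiv ℝ w (x₀ + s • e) e) t) t := by
      filter_upwards [hev] with t ht
      have hyn : B ∈ 𝓝 (x₀ + t • e) :=
        mem_of_superset (isOpen_ball.mem_nhds ht) ball_subset_closedBall
      have hwdt : DifferentiableAt ℝ w (x₀ + t • e) :=
        ((hu.contDiffAt hyn).sub (hv.contDiffAt hyn)).differentiableAt two_ne_zero
      simpa [Function.comp_def] using hwdt.hasFDerivAt.comp_hasDerivAt t (hL t)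
    have ha : HasDerivAt (fun s : ℝ => fderiv ℝ w (x₀ + s • e) e)
        (fderiv ℝ (fun y => fderiv ℝ w y e) x₀ e) 0 := by
      have hψ : DifferentiableAt ℝ (fun y => fderiv ℝ w y e) x₀ := hdiffd w (hud2.sub hvd2)
      have h00 : x₀ + (0:ℝ) • e = x₀ := by simp
      have hψf : HasFDerivAt (fun y => fderiv ℝ w y e)
          (fderiv ℝ (fun y => fderiv ℝ w y e) x₀) (x₀ + (0:ℝ) • e) := by
        rw [h00]; exact hψ.hasFDerivAt
      simpa [Function.comp_def] using hψf.comp_hasDerivAt 0 (hL 0)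
    have hmaxφ : IsLocalMax (fun s : ℝ => w (x₀ + s • e)) 0 := by
      filter_upwards [hev] with t ht
      have h1 : w (x₀ + t • e) ≤ w x₀ := hmax _ (ball_subset_closedBall ht)
      simpa using h1
    exact second_deriv_test hφ ha hmaxφ
    -- Nonlocal comparison
  set ν₁ := mollify1 ρ k μ₁ with hν₁
  set ν₂ := mollify2 ρ k μ₂ with hν₂
  haveI hfin1 : IsFiniteMeasure ν₁ := mollify1_finite hk hρsmooth hρsupp hM1
  haveI hfin2 : IsFiniteMeasure ν₂ := mollify2_finite hk hρsmooth hρsupp hM2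
  set p : RE N := gradW R u x₀ with hp
  obtain ⟨C₁, hC₁⟩ := hJ1' (‖p‖ + 1) (by positivity)
  obtain ⟨Cu, hCu⟩ :=
    (isCompact_closedBall (0:RE N) R).exists_bound_of_continuousOn hu.continuousOn
  obtain ⟨Cv, hCv⟩ :=
    (isCompact_closedBall (0:RE N) R).exists_bound_of_continuousOn hv.continuousOn
  have hmeas_comp : ∀ (φ : RE N → ℝ), ContinuousOn φ B → ∀ (j : RE N → RE P → RE N),
      Measurable (Function.uncurry j) →
      Measurable (fun z : RE P => φ (projR R (x₀ + j p z))) := by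
    intro φ hφ j hj
    have hjz : Measurable (fun z : RE P => j p z) := hj.comp measurable_prodMk_left
    have hinner : Measurable (fun z : RE P =>
        (⟨projR R (x₀ + j p z), projR_mem hRnn _⟩ : B)) :=
      (((measurable_projR R).comp (measurable_const.add hjz))).subtype_mk
    have houter : Continuous (B.restrict φ) := continuousOn_iff_continuous_restrict.1 hφ
    exact houter.measurable.comp hinner
  have hcor_meas : Measurable (fun z : RE P => if ‖z‖ < 1 then ⟪p, j₁ p z⟫_ℝ else 0) := by
    have hjz : Measurable (fun z : RE P => j₁ p z) := hj₁m.comp measurable_prodMk_left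
    exact Measurable.ite (measurableSet_lt measurable_norm measurable_const)
      (measurable_const.inner hjz) measurable_const
  have hcor_bound : ∀ z : RE P, ‖(if ‖z‖ < 1 then ⟪p, j₁ p z⟫_ℝ else 0)‖ ≤ ‖p‖ * max C₁ 0 := by
    intro z
    rw [Real.norm_eq_abs]
    split_ifs with h
    · calc |⟪p, j₁ p z⟫_ℝ| ≤ ‖p‖ * ‖j₁ p z‖ := abs_real_inner_le_norm _ _
      _ ≤ ‖p‖ * max C₁ 0 := by
          apply mul_le_mul_of_nonneg_left ?_ (norm_nonneg _)
          calc ‖j₁ p z‖ ≤ C₁ * ‖z‖ := hC₁ p z (by linarith [norm_nonneg p]) h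
          _ ≤ max C₁ 0 * ‖z‖ := mul_le_mul_of_nonneg_right (le_max_left _ _) (norm_nonneg _)
          _ ≤ max C₁ 0 * 1 := mul_le_mul_of_nonneg_left h.le (le_max_right _ _)
          _ = max C₁ 0 := mul_one _
    · simpa using mul_nonneg (norm_nonneg p) (le_max_right C₁ 0)
  have key : ∀ (φ : RE N → ℝ) (C : ℝ), ContinuousOn φ B → (∀ y ∈ B, ‖φ y‖ ≤ C) →
      Integrable (fun z : RE P => φ (projR R (x₀ + j₁ p z)) - φ x₀
        - (if ‖z‖ < 1 then ⟪p, j₁ p z⟫_ℝ else 0)) ν₁ ∧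
      Integrable (fun z : RE P => φ (projR R (x₀ + j₂ p z)) - φ x₀) ν₂ := by
    intro φ C hφ hC
    have hm1 : Measurable (fun z : RE P => φ (projR R (x₀ + j₁ p z))) := hmeas_comp φ hφ j₁ hj₁m
    have hm2 : Measurable (fun z : RE P => φ (projR R (x₀ + j₂ p z))) := hmeas_comp φ hφ j₂ hj₂m
    constructor
    · apply (integrable_const (C + C + ‖p‖ * max C₁ 0)).mono'
        ((hm1.sub measurable_const).sub hcor_meas).aestronglyMeasurable
      refine Filter.Eventually.of_forall fun z => ?_
      have h1 : ‖φ (projR R (x₀ + j₁ p z))‖ ≤ C := hC _ (projR_mem hRnn _)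
      have h2 : ‖φ x₀‖ ≤ C := hC _ hx₀B
      have h3 := hcor_bound z
      calc ‖φ (projR R (x₀ + j₁ p z)) - φ x₀ - (if ‖z‖ < 1 then ⟪p, j₁ p z⟫_ℝ else 0)‖
          ≤ ‖φ (projR R (x₀ + j₁ p z)) - φ x₀‖ + ‖(if ‖z‖ < 1 then ⟪p, j₁ p z⟫_ℝ else 0)‖ :=
            norm_sub_le _ _
      _ ≤ (‖φ (projR R (x₀ + j₁ p z))‖ + ‖φ x₀‖)
            + ‖(if ‖z‖ < 1 then ⟪p, j₁ p z⟫_ℝ else 0)‖ :=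
            add_le_add_left (norm_sub_le _ _) _
      _ ≤ C + C + ‖p‖ * max C₁ 0 := by
            refine add_le_add (add_le_add h1 h2) h3
    · apply (integrable_const (C + C)).mono' (hm2.sub measurable_const).aestronglyMeasurable
      refine Filter.Eventually.of_forall fun z => ?_
      have h1 : ‖φ (projR R (x₀ + j₂ p z))‖ ≤ C := hC _ (projR_mem hRnn _)
      have h2 : ‖φ x₀‖ ≤ C := hC _ hx₀B
      calc ‖φ (projR R (x₀ + j₂ p z)) - φ x₀‖
          ≤ ‖φ (projR R (x₀ + j₂ p z))‖ + ‖φ x₀‖ := norm_sub_le _ _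
      _ ≤ C + C := add_le_add h1 h2
  obtain ⟨hIu1, hIu2⟩ := key u Cu hu.continuousOn hCu
  obtain ⟨hIv1, hIv2⟩ := key v Cv hv.continuousOn hCv
  have hLRle : LRk ν₁ ν₂ j₁ j₂ R u x₀ ≤ LRk ν₁ ν₂ j₁ j₂ R v x₀ := by
    simp only [LRk, hgrad, ← hp]
    apply add_le_add
    · apply integral_mono hIu1 hIv1
      intro z
      have hmem := projR_mem hRnn (x₀ + j₁ p z)
      have hh := hmax _ hmem
      simp only
      linarith
    · apply integral_mono hIu2 hIv2
      intro z
      have hmem := projR_mem hRnn (x₀ + j₂ p z)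
      have hh := hmax _ hmem
      simp only
      linarith
  have h1 := husub x₀ hx₀
  have h2 := hvsuper x₀ hx₀
  have hfg' := hfg x₀ hx₀
  have hTM : TM M (LRk ν₁ ν₂ j₁ j₂ R u x₀) ≤ TM M (LRk ν₁ ν₂ j₁ j₂ R v x₀) :=
    min_le_min (max_le_max hLRle le_rfl) le_rfl
  have h4 : ε * (lapW R u x₀ - lapW R v x₀) ≤ 0 :=
    mul_nonpos_of_nonneg_of_nonpos hε.le hlap
  rw [mul_sub] at h4
  linarith
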